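/- Let M be a symmetric positive definite n×n real matrix, φ̄, φ̃ ∈ ℝⁿ with φ̄ ≠ 0, u ∈ ℝⁿ, u_D ∈ ℝ, and v = u − ((⟪φ̄,u⟫ − u_D)/(φ̄ᵀM⁻¹φ̄)) · M⁻¹φ̄. Then ⟪φ̃, v⟫ = ⟪φ̃ − α φ̄, u⟫ + α u_D, where α = (φ̃ᵀM⁻¹φ̄)/(φ̄ᵀM⁻¹φ̄). -/

import Mathlib

open Matrix

theorem dotProduct_sub_div_smul_eq {ι K : Type*} [Fintype ι] [Field K]
    (φb φt u w : ι → K) (uD : K) :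
    φt ⬝ᵥ (u - ((φb ⬝ᵥ u - uD) / (φb ⬝ᵥ w)) • w) =
      (φt - ((φt ⬝ᵥ w) / (φb ⬝ᵥ w)) • φb) ⬝ᵥ u + (φt ⬝ᵥ w) / (φb ⬝ᵥ w) * uD := by
  simp only [dotProduct_sub, dotProduct_smul, sub_dotProduct, smul_dotProduct, smul_eq_mul]
  -- division only occurs through the common factor `(φb ⬝ᵥ w)⁻¹`, so this is a ring identity
  ring

theorem rodW_polynomial_correction_general (n : ℕ) (M : Matrix (Fin n) (Fin n) ℝ)
    (φb φt u : Fin n → ℝ) (uD : ℝ) :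
    let v := u - ((φb ⬝ᵥ u - uD) / (φb ⬝ᵥ M⁻¹.mulVec φb)) • M⁻¹.mulVec φb
    let α := (φt ⬝ᵥ M⁻¹.mulVec φb) / (φb ⬝ᵥ M⁻¹.mulVec φb)
    φt ⬝ᵥ v = (φt - α • φb) ⬝ᵥ u + α * uD :=
  dotProduct_sub_div_smul_eq φb φt u (M⁻¹.mulVec φb) uD

/-- weighted ROD as polynomial correction:
`⟪φ̃, v⟫ = ⟪φ̃ − α φ̄, u⟫ + α u_D` with `α = (φ̃ᵀM⁻¹φ̄)/(φ̄ᵀM⁻¹φ̄)`. -/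
theorem rodW_polynomial_correction (n : ℕ) (M : Matrix (Fin n) (Fin n) ℝ) (hM : M.PosDef)
    (φb φt u : Fin n → ℝ) (hφ : φb ≠ 0) (uD : ℝ) :
    let v := u - ((φb ⬝ᵥ u - uD) / (φb ⬝ᵥ M⁻¹.mulVec φb)) • M⁻¹.mulVec φb
    let α := (φt ⬝ᵥ M⁻¹.mulVec φb) / (φb ⬝ᵥ M⁻¹.mulVec φb)
    φt ⬝ᵥ v = (φt - α • φb) ⬝ᵥ u + α * uD :=
  rodW_polynomial_correction_general n M φb φt u uD
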